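/- In the generic mirabolic Hecke algebra ℛ_n over ℂ(q), the Jucys–Murphy elements L_i = q^{1−i}·T_{i−1}⋯T_1·e·T_1⋯T_{i−1} (where e = q⁻¹(T_0 + 1)) pairwise commute: L_i·L_j = L_j·L_i for all 1 ≤ i, j ≤ n. -/

import Mathlib

/-!
Since `L_{m+1} = q⁻¹ T_m L_m T_m` and `T_k` commutes with `L_i` for `k > i`, an induction on `j`
reduces `L_i L_j = L_j L_i` (`i ≤ j`) to the single identity that `L_i` commutes with
`T_i L_i T_i`. For `i = 1` this is a short computation with the quadratic relation of `T_1` and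
the two quartic relations between `T_0` and `T_1`. The step from `i = m` to `i = m + 1` holds in
any monoid: it only uses the braid relation between `T_m` and `T_{m+1}` and that `T_{m+1}`
commutes with `L_m`.
-/

noncomputable section

/-- The relations of Solomon's presentation of the mirabolic Hecke algebra `R_n(K,q)`,
on generators `T_0, T_1, …, T_{n-1}` (indexed by `Fin n`). -/
inductive SolomonRel (K : Type) [Field K] (q : K) (n : ℕ) :
    FreeAlgebra K (Fin n) → FreeAlgebra K (Fin n) → Prop
  | quad0 (i : Fin n) (hi : i.val = 0) :
      SolomonRel K q n (FreeAlgebra.ι K i * FreeAlgebra.ι K i)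
        ((q - 2) • FreeAlgebra.ι K i + (q - 1) • (1 : FreeAlgebra K (Fin n)))
  | quad (i : Fin n) (hi : 1 ≤ i.val) :
      SolomonRel K q n (FreeAlgebra.ι K i * FreeAlgebra.ι K i)
        ((q - 1) • FreeAlgebra.ι K i + q • (1 : FreeAlgebra K (Fin n)))
  | braid (i j : Fin n) (hi : 1 ≤ i.val) (hij : i.val + 1 = j.val) :
      SolomonRel K q n (FreeAlgebra.ι K i * FreeAlgebra.ι K j * FreeAlgebra.ι K i)
        (FreeAlgebra.ι K j * FreeAlgebra.ι K i * FreeAlgebra.ι K j)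
  | rel4 (i j : Fin n) (hi : i.val = 0) (hj : j.val = 1) :
      SolomonRel K q n
        (FreeAlgebra.ι K i * FreeAlgebra.ι K j * FreeAlgebra.ι K i * FreeAlgebra.ι K j)
        ((q - 1) • (FreeAlgebra.ι K j * FreeAlgebra.ι K i * FreeAlgebra.ι K j +
            FreeAlgebra.ι K j * FreeAlgebra.ι K i) -
          FreeAlgebra.ι K i * FreeAlgebra.ι K j * FreeAlgebra.ι K i)
  | rel5 (i j : Fin n) (hi : i.val = 0) (hj : j.val = 1) :
      SolomonRel K q n
        (FreeAlgebra.ι K j * FreeAlgebra.ι K i * FreeAlgebra.ι K j * FreeAlgebra.ι K i)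
        ((q - 1) • (FreeAlgebra.ι K j * FreeAlgebra.ι K i * FreeAlgebra.ι K j +
            FreeAlgebra.ι K i * FreeAlgebra.ι K j) -
          FreeAlgebra.ι K i * FreeAlgebra.ι K j * FreeAlgebra.ι K i)
  | comm (i j : Fin n) (hij : i.val + 2 ≤ j.val ∨ j.val + 2 ≤ i.val) :
      SolomonRel K q n (FreeAlgebra.ι K i * FreeAlgebra.ι K j)
        (FreeAlgebra.ι K j * FreeAlgebra.ι K i)

/-- The mirabolic Hecke algebra `R_n(K,q)`, presented by Solomon's relations. -/
abbrev MirabolicHecke (K : Type) [Field K] (q : K) (n : ℕ) : Type :=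
  RingQuot (SolomonRel K q n)

/-- The generator `T_i` of the mirabolic Hecke algebra. -/
def MirabolicHecke.T {K : Type} [Field K] {q : K} {n : ℕ} (i : Fin n) :
    MirabolicHecke K q n :=
  RingQuot.mkAlgHom K (SolomonRel K q n) (FreeAlgebra.ι K i)


section JM

local notation "K" => RatFunc ℂ
local notation "q" => (RatFunc.X : RatFunc ℂ)

variable (n : ℕ)

/-- The generic mirabolic Hecke algebra `ℛ_n` over `ℂ(q)`. -/
abbrev GenMirabolic (n : ℕ) : Type := MirabolicHecke K q n

/-- The generator `T_j` of `ℛ_n`, indexed by a natural number (junk value `0` if `j ≥ n`). -/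
def Tnat (j : ℕ) : GenMirabolic n :=
  if h : j < n then MirabolicHecke.T ⟨j, h⟩ else 0

/-- The idempotent `e = q⁻¹(T_0 + 1)` of `ℛ_n`. -/
def eElt : GenMirabolic n := q⁻¹ • (Tnat n 0 + 1)

/-- The Jucys–Murphy element `L_i = q^{1−i}·T_{i−1}⋯T_1·e·T_1⋯T_{i−1}` of `ℛ_n`
(for `1 ≤ i ≤ n`; in particular `L_1 = e`). -/
def JM (i : ℕ) : GenMirabolic n :=
  (q ^ (1 - (i : ℤ))) •
    (((List.range (i - 1)).reverse.map fun k => Tnat n (k + 1)).prod * eElt n *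
      ((List.range (i - 1)).map fun k => Tnat n (k + 1)).prod)

end JM

theorem Commute.conj_braid {M : Type*} [Monoid M] {t u l : M} (hb : u * t * u = t * u * t)
    (htl : Commute t l) (hl : Commute l (u * l * u)) :
    Commute (u * l * u) (t * (u * l * u) * t) := by
  have hb' (z : M) : u * (t * (u * z)) = t * (u * (t * z)) := by
    simpa only [mul_assoc] using congrArg (· * z) hb
  have hb₀ : t * (u * t) = u * (t * u) := by simpa only [mul_assoc] using hb.symm
  have hl' : l * u * l * u = u * l * u * l := by simpa only [mul_assoc] using hl.eq
  have lhs : u * l * u * (t * (u * l * u) * t) = u * t * (l * u * l * u) * t * u := by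
    simp only [mul_assoc]
    rw [hb' (l * (u * t)), ← htl.left_comm (u * (t * (l * (u * t)))), htl.left_comm (u * t), hb₀]
  have rhs : t * (u * l * u) * t * (u * l * u) = u * t * (u * l * u * l) * t * u := by
    simp only [mul_assoc]
    rw [hb' (l * u), ← htl.left_comm (u * (t * (l * u))), htl.left_comm u, ← hb']
  rw [Commute, SemiconjBy, lhs, rhs, hl']

theorem commute_add_one_mul_add_one_mul {R A : Type*} [CommRing R] [Ring A] [Algebra R A]
    {a b : A} {c d : R} (hb : b * b = c • b + d • 1)
    (hab : a * b * a * b = c • (b * a * b + b * a) - a * b * a)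
    (hba : b * a * b * a = c • (b * a * b + a * b) - a * b * a) :
    Commute (a + 1) (b * (a + 1) * b) := by
  have hconj : b * (a + 1) * b = (b * a * b + c • b) + d • 1 := by
    rw [mul_add, mul_one, add_mul, hb, add_assoc]
  have ha : Commute a (b * a * b + c • b) := by
    simp only [Commute, SemiconjBy, mul_add, add_mul, mul_smul_comm, smul_mul_assoc, ← mul_assoc]
    rw [hab, hba]
    simp only [smul_add]
    abel
  rw [hconj]
  exact (ha.add_right ((Commute.one_right a).smul_right d)).add_left (Commute.one_left _)

section Relations

local notation "K" => RatFunc ℂ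
local notation "q" => (RatFunc.X : RatFunc ℂ)

variable {n : ℕ}

theorem Tnat_eq_mkAlgHom {a : ℕ} (h : a < n) :
    Tnat n a = RingQuot.mkAlgHom K (SolomonRel K q n) (FreeAlgebra.ι K ⟨a, h⟩) := by
  simp [Tnat, h, MirabolicHecke.T]

theorem mkAlgHom_eq_of_solomonRel {x y : FreeAlgebra K (Fin n)} (h : SolomonRel K q n x y) :
    RingQuot.mkAlgHom K (SolomonRel K q n) x = RingQuot.mkAlgHom K (SolomonRel K q n) y :=
  RingQuot.mkAlgHom_rel K h

theorem Tnat_mul_self {a : ℕ} (h1 : 1 ≤ a) (h : a < n) :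
    Tnat n a * Tnat n a = (q - 1) • Tnat n a + q • 1 := by
  simpa [Tnat_eq_mkAlgHom h] using mkAlgHom_eq_of_solomonRel (SolomonRel.quad ⟨a, h⟩ h1)

theorem Tnat_braid {a : ℕ} (h1 : 1 ≤ a) (h : a + 1 < n) :
    Tnat n a * Tnat n (a + 1) * Tnat n a = Tnat n (a + 1) * Tnat n a * Tnat n (a + 1) := by
  simpa [Tnat_eq_mkAlgHom h, Tnat_eq_mkAlgHom (Nat.lt_of_succ_lt h)] using
    mkAlgHom_eq_of_solomonRel (SolomonRel.braid ⟨a, by omega⟩ ⟨a + 1, h⟩ h1 rfl)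

theorem Tnat_zero_one_zero_one (h : 1 < n) :
    Tnat n 0 * Tnat n 1 * Tnat n 0 * Tnat n 1 =
      (q - 1) • (Tnat n 1 * Tnat n 0 * Tnat n 1 + Tnat n 1 * Tnat n 0) -
        Tnat n 0 * Tnat n 1 * Tnat n 0 := by
  simpa [Tnat_eq_mkAlgHom h, Tnat_eq_mkAlgHom (Nat.zero_lt_of_lt h)] using
    mkAlgHom_eq_of_solomonRel (SolomonRel.rel4 ⟨0, by omega⟩ ⟨1, h⟩ rfl rfl)

theorem Tnat_one_zero_one_zero (h : 1 < n) :
    Tnat n 1 * Tnat n 0 * Tnat n 1 * Tnat n 0 =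
      (q - 1) • (Tnat n 1 * Tnat n 0 * Tnat n 1 + Tnat n 0 * Tnat n 1) -
        Tnat n 0 * Tnat n 1 * Tnat n 0 := by
  simpa [Tnat_eq_mkAlgHom h, Tnat_eq_mkAlgHom (Nat.zero_lt_of_lt h)] using
    mkAlgHom_eq_of_solomonRel (SolomonRel.rel5 ⟨0, by omega⟩ ⟨1, h⟩ rfl rfl)

theorem commute_Tnat_of_add_two_le {a b : ℕ} (h : a + 2 ≤ b) :
    Commute (Tnat n a) (Tnat n b) := by
  by_cases hb : b < n
  · simpa [Commute, SemiconjBy, Tnat_eq_mkAlgHom hb, Tnat_eq_mkAlgHom (by omega : a < n)] using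
      mkAlgHom_eq_of_solomonRel (SolomonRel.comm ⟨a, by omega⟩ ⟨b, hb⟩ (Or.inl h))
  · rw [show Tnat n b = 0 from dif_neg hb]
    exact Commute.zero_right _

end Relations

section JucysMurphy

local notation "q" => (RatFunc.X : RatFunc ℂ)

variable {n : ℕ}

theorem JM_one : JM n 1 = eElt n := by
  simp [JM]

theorem JM_succ {m : ℕ} (hm : 1 ≤ m) : JM n (m + 1) = q⁻¹ • (Tnat n m * JM n m * Tnat n m) := by
  obtain ⟨k, rfl⟩ : ∃ k, m = k + 1 := ⟨m - 1, by omega⟩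
  have hq : q ^ (1 - ((k + 1 + 1 : ℕ) : ℤ)) = q⁻¹ * q ^ (1 - ((k + 1 : ℕ) : ℤ)) := by
    rw [← zpow_neg_one, ← zpow_add₀ RatFunc.X_ne_zero]
    congr 1
    push_cast
    ring
  simp only [JM, hq, mul_smul, smul_mul_assoc, mul_smul_comm, Nat.add_sub_cancel, List.range_succ,
    List.map_append, List.reverse_append, List.prod_append, List.map_cons, List.map_nil,
    List.reverse_cons, List.reverse_nil, List.nil_append, List.prod_cons, List.prod_nil, mul_one,
    mul_assoc]

theorem commute_Tnat_JM {i k : ℕ} (hi : 1 ≤ i) (hk : i + 1 ≤ k) :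
    Commute (Tnat n k) (JM n i) := by
  induction i, hi using Nat.le_induction with
  | base =>
    rw [JM_one, eElt]
    exact (((commute_Tnat_of_add_two_le (n := n) hk).symm.add_right (Commute.one_right _)).smul_right _)
  | succ m hm ih =>
    rw [JM_succ hm]
    have hmk := (commute_Tnat_of_add_two_le (n := n) (a := m) (b := k) (by omega)).symm
    exact ((hmk.mul_right (ih (by omega))).mul_right hmk).smul_right _

theorem commute_JM_Tnat_mul_JM_mul_Tnat {i : ℕ} (hi : 1 ≤ i) (hin : i < n) :
    Commute (JM n i) (Tnat n i * JM n i * Tnat n i) := by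
  induction i, hi using Nat.le_induction with
  | base =>
    rw [JM_one, eElt]
    simp only [smul_mul_assoc, mul_smul_comm]
    exact ((commute_add_one_mul_add_one_mul (Tnat_mul_self le_rfl hin)
      (Tnat_zero_one_zero_one hin) (Tnat_one_zero_one_zero hin)).smul_right _).smul_left _
  | succ m hm ih =>
    rw [JM_succ hm]
    simp only [smul_mul_assoc, mul_smul_comm]
    exact ((Commute.conj_braid (Tnat_braid hm hin) (commute_Tnat_JM hm le_rfl)
      (ih (by omega))).smul_right _).smul_left _

theorem commute_JM_of_le {i j : ℕ} (hi : 1 ≤ i) (hij : i ≤ j) (hjn : j ≤ n) :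
    Commute (JM n i) (JM n j) := by
  induction j, hij using Nat.le_induction with
  | base => exact Commute.refl _
  | succ m hm ih =>
    rw [JM_succ (hi.trans hm)]
    refine Commute.smul_right ?_ _
    rcases hm.eq_or_lt with rfl | hlt
    · simpa only [mul_assoc] using commute_JM_Tnat_mul_JM_mul_Tnat hi (by omega)
    · have hT := (commute_Tnat_JM (n := n) hi hlt).symm
      exact (hT.mul_right (ih (by omega))).mul_right hT

end JucysMurphy

/-- The Jucys–Murphy elements of the generic mirabolic Hecke algebra
`ℛ_n` pairwise commute. -/
theorem jucysMurphy_commute (n : ℕ) (i j : ℕ) (hi1 : 1 ≤ i) (hin : i ≤ n)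
    (hj1 : 1 ≤ j) (hjn : j ≤ n) :
    JM n i * JM n j = JM n j * JM n i := by
  rcases le_total i j with h | h
  · exact (commute_JM_of_le hi1 h hjn).eq
  · exact (commute_JM_of_le hj1 h hin).eq.symm
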